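/- Fix r ≥ 1, n ∈ ℕ, B ∈ ℝ with 0 < |B| < 1, and real numbers α_1, …, α_r and γ_1, …, γ_r such that: α_k ≠ −m for every k and every m ∈ ℕ; γ_j − γ_k is not an integer whenever j ≠ k; and γ_j − γ_k − α_j is not an integer whenever j ≠ k. Define P : ℝ → ℝ by P(x) = Σ_{j=0}^{n} (−1)^j C(n,j) B^(−j) · Π_{k=1}^{r} [ Π_{i=0}^{j−1} (x − γ_k − i) · Π_{i=0}^{n−j−1} (x − γ_k + α_k + i) ]. Then: (i) P is the evaluation of a real polynomial of degree exactly r·n; (ii) for every index l ∈ {1,…,r} and every natural number k < n, the series Σ_{m=0}^{∞} P(γ_l + m) · (γ_l + m)^k · B^m · Π_{k'=1}^{r} [ Γ(m + γ_l − γ_{k'} + α_{k'}) / Γ(m + γ_l − γ_{k'} + 1) ] converges and has sum 0. -/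

import Mathlib

/-
On the lattice `γ_l + ℕ` the Rodrigues formula `P · R = ∇ⁿ R_n` holds term by term: the `j`-th
summand of `P(x) R(x)` is `R_n(x - j)`, which vanishes below the lattice because the falling
factorial of the `l`-th factor does. Shifting the summation index therefore turns the moment
`∑ₘ P(x) xᵏ R(x)` into `∑ₜ R_n(γ_l + t) · Δⁿ[xᵏ](γ_l + t)`, and the `n`-th forward difference of a
polynomial of degree `k < n` is zero. All series converge by the ratio test, since the ratio of
consecutive weights tends to `B`. For the degree, each summand of `P` is `B^{-j}` times a monic
polynomial of degree `r n`, and these coefficients add up to `(1 - B⁻¹)ⁿ ≠ 0` because `B ≠ 1`.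
-/

open Finset Polynomial Filter Topology

theorem sum_range_neg_one_pow_mul_choose_mul_add_pow_eq_zero {R : Type*} [CommRing R]
    {n k : ℕ} (hk : k < n) (x : R) :
    ∑ j ∈ range (n + 1), (-1) ^ j * (n.choose j : R) * (x + j) ^ k = 0 := by
  have h := congr_fun (fwdDiff_iter_pow_eq_zero_of_lt (R := R) hk) x
  rw [fwdDiff_iter_eq_sum_shift] at h
  calc _ = (-1) ^ n * ∑ j ∈ range (n + 1), ((-1 : ℤ) ^ (n - j) * n.choose j) • (x + j • 1) ^ k := by
        rw [mul_sum]
        refine sum_congr rfl fun j hj => ?_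
        have hj : j ≤ n := Nat.lt_succ_iff.mp (mem_range.mp hj)
        obtain ⟨d, rfl⟩ := Nat.exists_eq_add_of_le hj
        simp only [pow_add, Nat.add_sub_cancel_left, zsmul_eq_mul, nsmul_one]
        push_cast
        have hd : (-1 : R) ^ d * (-1) ^ d = 1 := by rw [← mul_pow]; simp
        linear_combination (-(-1 : R) ^ j * (j + d).choose j * (x + j) ^ k) * hd
    _ = 0 := by rw [h, Pi.zero_apply, mul_zero]

theorem Polynomial.degree_sum_C_mul_eq_of_monic {R ι : Type*} [Semiring R] (s : Finset ι)
    (c : ι → R) (M : ι → R[X]) {N : ℕ} (hmonic : ∀ i ∈ s, (M i).Monic)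
    (hdeg : ∀ i ∈ s, (M i).natDegree = N) (hc : ∑ i ∈ s, c i ≠ 0) :
    (∑ i ∈ s, C (c i) * M i).degree = N := by
  refine degree_eq_of_le_of_coeff_ne_zero ((degree_sum_le _ _).trans ?_) ?_
  · exact Finset.sup_le fun i hi =>
      degree_le_of_natDegree_le ((natDegree_C_mul_le _ _).trans (hdeg i hi).le)
  · rwa [finsetSum_coeff, sum_congr rfl fun i hi => by
      rw [coeff_C_mul, ← hdeg i hi, (hmonic i hi).coeff_natDegree, mul_one]]

section RodriguesPolynomial

variable {ι : Type*} [Fintype ι]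

noncomputable def rodriguesPoly (B : ℝ) (α γ : ι → ℝ) (n : ℕ) : ℝ[X] :=
  ∑ j ∈ range (n + 1), C ((-1) ^ j * n.choose j * B ^ (-(j : ℤ))) *
    ∏ k, ((∏ i ∈ range j, (X - C (γ k + i))) * ∏ i ∈ range (n - j), (X - C (γ k - α k - i)))

theorem eval_rodriguesPoly (B : ℝ) (α γ : ι → ℝ) (n : ℕ) (x : ℝ) :
    (rodriguesPoly B α γ n).eval x = ∑ j ∈ range (n + 1),
      (-1) ^ j * n.choose j * B ^ (-(j : ℤ)) *
        ∏ k, ((∏ i ∈ range j, (x - γ k - i)) * ∏ i ∈ range (n - j), (x - γ k + α k + i)) := by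
  simp only [rodriguesPoly, eval_finsetSum, eval_mul, eval_C, eval_prod, eval_sub, eval_X]
  congr! 5 <;> ring

theorem sum_range_neg_one_pow_mul_choose_mul_zpow (B : ℝ) (n : ℕ) :
    ∑ j ∈ range (n + 1), (-1) ^ j * n.choose j * B ^ (-(j : ℤ)) = (1 - B⁻¹) ^ n := by
  rw [sub_eq_neg_add, add_pow]
  refine sum_congr rfl fun j _ => ?_
  rw [zpow_neg, zpow_natCast, ← inv_pow, neg_pow B⁻¹]
  ring

theorem degree_rodriguesPoly {B : ℝ} (hB : B ≠ 1) (α γ : ι → ℝ) (n : ℕ) :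
    (rodriguesPoly B α γ n).degree = (Fintype.card ι * n : ℕ) := by
  have hmonic : ∀ j k, ((∏ i ∈ range j, (X - C (γ k + i))) *
      ∏ i ∈ range (n - j), (X - C (γ k - α k - i))).Monic := fun j k =>
    (monic_prod_X_sub_C _ _).mul (monic_prod_X_sub_C _ _)
  refine degree_sum_C_mul_eq_of_monic _ _ _ (fun j _ => monic_prod_of_monic _ _ fun k _ =>
    hmonic j k) (fun j hj => ?_) ?_
  · rw [natDegree_prod_of_monic _ _ fun k _ => hmonic j k]
    simp_rw [(monic_prod_X_sub_C _ _).natDegree_mul (monic_prod_X_sub_C _ _),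
      natDegree_finsetProd_X_sub_C_eq_card, card_range,
      Nat.add_sub_cancel' (Nat.lt_succ_iff.mp (mem_range.mp hj)), sum_const, card_univ,
      smul_eq_mul]
  · rw [sum_range_neg_one_pow_mul_choose_mul_zpow]
    exact pow_ne_zero _ (sub_ne_zero.mpr (Ne.symm (inv_ne_one.mpr hB)))

end RodriguesPolynomial

theorem Real.Gamma_add_nat_eq_prod_mul (y : ℝ) (s : ℕ) (h : ∀ i < s, y + i ≠ 0) :
    Real.Gamma (y + s) = (∏ i ∈ range s, (y + i)) * Real.Gamma y := by
  induction s with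
  | zero => simp
  | succ s ih =>
    rw [Nat.cast_succ, ← add_assoc, Real.Gamma_add_one (h s s.lt_succ_self), prod_range_succ,
      ih fun i hi => h i (hi.trans s.lt_succ_self)]
    ring

theorem Real.Gamma_add_one_eq_prod_sub_mul (y : ℝ) (j : ℕ) (h : ∀ i < j, y - i ≠ 0) :
    Real.Gamma (y + 1) = (∏ i ∈ range j, (y - i)) * Real.Gamma (y - j + 1) := by
  have hreflect : ∀ i < j, y - j + 1 + i = y - (j - 1 - i : ℕ) := fun i hi => by
    rw [Nat.sub_sub, Nat.cast_sub (by omega)]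
    push_cast
    ring
  have hshift := Real.Gamma_add_nat_eq_prod_mul (y - j + 1) j fun i hi => by
    rw [hreflect i hi]
    exact h _ (by omega)
  rw [prod_congr rfl fun i hi => hreflect i (mem_range.mp hi),
    prod_range_reflect (fun i : ℕ => y - i) j] at hshift
  rw [← hshift]
  ring_nf

theorem prod_sub_mul_prod_add_mul_Gamma_div_Gamma (y a : ℝ) {j n : ℕ} (hjn : j ≤ n)
    (hfall : ∀ i < j, y - i ≠ 0) (hrise : ∀ i < n - j, y + a + i ≠ 0) :
    (∏ i ∈ range j, (y - i)) * (∏ i ∈ range (n - j), (y + a + i)) *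
        (Real.Gamma (y + a) / Real.Gamma (y + 1)) =
      Real.Gamma (y - j + a + n) / Real.Gamma (y - j + 1) := by
  have hF : ∏ i ∈ range j, (y - i) ≠ 0 := prod_ne_zero_iff.mpr fun i hi => hfall i (mem_range.mp hi)
  have hnum : y - j + a + n = y + a + (n - j : ℕ) := by rw [Nat.cast_sub hjn]; ring
  rw [hnum, Real.Gamma_add_nat_eq_prod_mul _ _ hrise, Real.Gamma_add_one_eq_prod_sub_mul _ _ hfall,
    ← mul_div_mul_left (_ * Real.Gamma (y + a)) (Real.Gamma (y - j + 1)) hF]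
  ring

theorem summable_add_pow_mul_of_tendsto_div {w : ℕ → ℝ} {b : ℝ} (hb : |b| < 1)
    (hw : ∀ t, w t ≠ 0) (hratio : Tendsto (fun t => w (t + 1) / w t) atTop (𝓝 b)) (x : ℝ)
    (k : ℕ) : Summable fun t : ℕ => (x + t) ^ k * w t := by
  have hx : ∀ᶠ t : ℕ in atTop, x + t ≠ 0 :=
    (tendsto_atTop_add_const_left _ x tendsto_natCast_atTop_atTop).eventually_ne_atTop 0
  have hpow : Tendsto (fun t : ℕ => ((x + 1 + t) / (x + t)) ^ k) atTop (𝓝 1) := by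
    simpa using (tendsto_add_mul_div_add_mul_atTop_nhds (x + 1) x (1 : ℝ) one_ne_zero).pow k
  refine summable_of_ratio_test_tendsto_lt_one hb (hx.mono fun t ht => mul_ne_zero
    (pow_ne_zero _ ht) (hw t)) ?_
  have hlim := (hpow.mul hratio).abs
  rw [one_mul] at hlim
  refine hlim.congr' ?_
  filter_upwards [hx] with t ht
  rw [Real.norm_eq_abs, Real.norm_eq_abs, ← abs_div, Nat.cast_succ, div_pow]
  congr 1
  field_simp
  ring

theorem hasSum_sum_neg_one_pow_mul_choose_mul_pow_mul_shift_eq_zero {w : ℕ → ℝ} {x : ℝ}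
    {n k : ℕ} (hk : k < n) (hw : ∀ j : ℕ, Summable fun t : ℕ => (x + j + t) ^ k * w t) :
    HasSum (fun m : ℕ => ∑ j ∈ range (n + 1),
      (-1) ^ j * n.choose j * (x + m) ^ k * (if j ≤ m then w (m - j) else 0)) 0 := by
  have hshift : ∀ j : ℕ, HasSum (fun m : ℕ => (x + m) ^ k * (if j ≤ m then w (m - j) else 0))
      (∑' t, (x + j + t) ^ k * w t) := fun j => by
    have h := (hasSum_nat_add_iff (f := fun m : ℕ => (x + m) ^ k *
      (if j ≤ m then w (m - j) else 0)) j).mp <| (hw j).hasSum.congr_fun fun t => by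
        simp only [le_add_iff_nonneg_left, zero_le, if_true, Nat.add_sub_cancel, Nat.cast_add]
        ring_nf
    rwa [sum_eq_zero fun i hi => by simp [(mem_range.mp hi).not_ge], add_zero] at h
  have hsum := hasSum_sum fun j (_ : j ∈ range (n + 1)) =>
    (hshift j).mul_left ((-1 : ℝ) ^ j * n.choose j)
  have hzero : HasSum (fun _ : ℕ => (0 : ℝ))
      (∑ j ∈ range (n + 1), (-1) ^ j * n.choose j * ∑' t, (x + j + t) ^ k * w t) := by
    refine (hasSum_sum fun j (_ : j ∈ range (n + 1)) =>
      ((hw j).hasSum.mul_left ((-1 : ℝ) ^ j * n.choose j))).congr_fun fun t => ?_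
    rw [← zero_mul (w t), ← sum_range_neg_one_pow_mul_choose_mul_add_pow_eq_zero hk (x + t),
      sum_mul]
    refine sum_congr rfl fun j _ => ?_
    ring
  rw [← hasSum_zero.unique hzero] at hsum
  exact hsum.congr_fun fun m => sum_congr rfl fun j _ => mul_assoc _ _ _

/-- Up to a constant factor, `latticeWeight B α γ x₀ t` is the product `R` of Meixner weights at
`x₀ + t`; with `α + n` in place of `α` it is the weight `R_n` of the Rodrigues formula. -/
noncomputable def latticeWeight {ι : Type*} [Fintype ι] (B : ℝ) (α γ : ι → ℝ) (x₀ : ℝ) (t : ℕ) :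
    ℝ :=
  B ^ t * ∏ k, Real.Gamma (t + x₀ - γ k + α k) / Real.Gamma (t + x₀ - γ k + 1)

section LatticeWeight

variable {ι : Type*} [Fintype ι] {B : ℝ} {α γ : ι → ℝ} {x₀ : ℝ}

theorem latticeWeight_ne_zero (hB : B ≠ 0) (hnum : ∀ k (z : ℕ), x₀ - γ k + α k + z ≠ 0)
    (hden : ∀ k (z : ℕ), x₀ - γ k + z + 1 ≠ 0) (t : ℕ) : latticeWeight B α γ x₀ t ≠ 0 := by
  refine mul_ne_zero (pow_ne_zero _ hB) (prod_ne_zero_iff.mpr fun k _ => div_ne_zero ?_ ?_) <;>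
    refine Real.Gamma_ne_zero fun m h => ?_
  · exact hnum k (t + m) (by push_cast; linarith)
  · exact hden k (t + m) (by push_cast; linarith)

theorem latticeWeight_succ (hnum : ∀ k (z : ℕ), x₀ - γ k + α k + z ≠ 0)
    (hden : ∀ k (z : ℕ), x₀ - γ k + z + 1 ≠ 0) (t : ℕ) :
    latticeWeight B α γ x₀ (t + 1) =
      (B * ∏ k, (t + x₀ - γ k + α k) / (t + x₀ - γ k + 1)) * latticeWeight B α γ x₀ t := by
  have hstep : ∀ k, Real.Gamma ((t + 1 : ℕ) + x₀ - γ k + α k) /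
      Real.Gamma ((t + 1 : ℕ) + x₀ - γ k + 1) = (t + x₀ - γ k + α k) / (t + x₀ - γ k + 1) *
        (Real.Gamma (t + x₀ - γ k + α k) / Real.Gamma (t + x₀ - γ k + 1)) := fun k => by
    have hnum' : (t : ℝ) + x₀ - γ k + α k ≠ 0 := by convert hnum k t using 1; ring
    have hden' : (t : ℝ) + x₀ - γ k + 1 ≠ 0 := by convert hden k t using 1; ring
    rw [div_mul_div_comm, ← Real.Gamma_add_one hnum', ← Real.Gamma_add_one hden']
    push_cast
    ring_nf
  simp only [latticeWeight, hstep, prod_mul_distrib, pow_succ]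
  ring

theorem tendsto_latticeWeight_succ_div (hB : B ≠ 0) (hnum : ∀ k (z : ℕ), x₀ - γ k + α k + z ≠ 0)
    (hden : ∀ k (z : ℕ), x₀ - γ k + z + 1 ≠ 0) :
    Tendsto (fun t => latticeWeight B α γ x₀ (t + 1) / latticeWeight B α γ x₀ t) atTop (𝓝 B) := by
  have hfactor : ∀ k, Tendsto (fun t : ℕ => (t + x₀ - γ k + α k) / (t + x₀ - γ k + 1)) atTop
      (𝓝 1) := fun k => by
    have h := tendsto_add_mul_div_add_mul_atTop_nhds (x₀ - γ k + α k) (x₀ - γ k + 1) 1 one_ne_zero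
    rw [div_one] at h
    exact h.congr fun t => by ring
  have hlim := tendsto_const_nhds (x := B).mul (tendsto_finsetProd univ fun k _ => hfactor k)
  rw [prod_const_one, mul_one] at hlim
  refine hlim.congr fun t => ?_
  rw [latticeWeight_succ hnum hden, mul_div_assoc, div_self (latticeWeight_ne_zero hB hnum hden t),
    mul_one]

theorem summable_add_pow_mul_latticeWeight (hB : B ≠ 0) (hB1 : |B| < 1)
    (hnum : ∀ k (z : ℕ), x₀ - γ k + α k + z ≠ 0) (hden : ∀ k (z : ℕ), x₀ - γ k + z + 1 ≠ 0)
    (x : ℝ) (k : ℕ) : Summable fun t : ℕ => (x + t) ^ k * latticeWeight B α γ x₀ t :=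
  summable_add_pow_mul_of_tendsto_div hB1 (latticeWeight_ne_zero hB hnum hden)
    (tendsto_latticeWeight_succ_div hB hnum hden) x k

theorem rodrigues_term_mul_latticeWeight (hB : B ≠ 0) {l : ι}
    (hnum : ∀ k (z : ℕ), γ l - γ k + α k + z ≠ 0) (hden : ∀ k (z : ℕ), γ l - γ k + z + 1 ≠ 0)
    {j n : ℕ} (hjn : j ≤ n) (m : ℕ) :
    B ^ (-(j : ℤ)) * (∏ k, ((∏ i ∈ range j, (γ l + m - γ k - i)) *
        ∏ i ∈ range (n - j), (γ l + m - γ k + α k + i))) * latticeWeight B α γ (γ l) m =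
      if j ≤ m then latticeWeight B (fun k => α k + n) γ (γ l) (m - j) else 0 := by
  simp only [add_comm (γ l) (m : ℝ)]
  split_ifs with hjm
  · obtain ⟨t, rfl⟩ := Nat.exists_eq_add_of_le' hjm
    have hpow : B ^ (-(j : ℤ)) * B ^ (t + j) = B ^ t := by
      rw [← zpow_natCast, ← zpow_add₀ hB, ← zpow_natCast]
      push_cast
      ring_nf
    have hfactor : ∀ k, ((∏ i ∈ range j, ((t + j : ℕ) + γ l - γ k - i)) *
        ∏ i ∈ range (n - j), ((t + j : ℕ) + γ l - γ k + α k + i)) *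
          (Real.Gamma ((t + j : ℕ) + γ l - γ k + α k) / Real.Gamma ((t + j : ℕ) + γ l - γ k + 1)) =
        Real.Gamma (t + γ l - γ k + (α k + n)) / Real.Gamma (t + γ l - γ k + 1) := fun k => by
      rw [prod_sub_mul_prod_add_mul_Gamma_div_Gamma _ _ hjn]
      · push_cast
        ring_nf
      · intro i hi
        convert hden k (t + j - i - 1) using 1
        rw [Nat.sub_sub, Nat.cast_sub (by omega)]
        push_cast
        ring
      · intro i _
        convert hnum k (t + j + i) using 1
        push_cast
        ring
    rw [latticeWeight, latticeWeight, Nat.add_sub_cancel, ← hpow,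
      ← prod_congr rfl fun k _ => hfactor k]
    simp only [prod_mul_distrib]
    ring
  · rw [prod_eq_zero (mem_univ l) ?_, mul_zero, zero_mul]
    rw [prod_eq_zero (mem_range.mpr (not_le.mp hjm)) (by ring), zero_mul]

end LatticeWeight

theorem sub_add_add_natCast_ne_zero {ι : Type*} {α γ : ι → ℝ} (hα : ∀ k (m : ℕ), α k ≠ -m)
    (hγα : ∀ j k, j ≠ k → ∀ z : ℤ, γ j - γ k - α j ≠ z) (l k : ι) (z : ℕ) :
    γ l - γ k + α k + z ≠ 0 := by
  rcases eq_or_ne k l with rfl | hkl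
  · exact fun h => hα k z (by linarith)
  · exact fun h => hγα k l hkl z (by push_cast; linarith)

theorem sub_add_natCast_add_one_ne_zero {ι : Type*} {γ : ι → ℝ}
    (hγ : ∀ j k, j ≠ k → ∀ z : ℤ, γ j - γ k ≠ z) (l k : ι) (z : ℕ) :
    γ l - γ k + z + 1 ≠ 0 := by
  rcases eq_or_ne k l with rfl | hkl
  · rw [sub_self, zero_add]
    positivity
  · exact fun h => hγ l k hkl.symm (-(z + 1)) (by push_cast; linarith)

theorem stmt_6_general (r : ℕ) (n : ℕ) (B : ℝ) (hB0 : 0 < |B|) (hB1 : |B| < 1)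
    (α γ : Fin r → ℝ)
    (hα : ∀ k : Fin r, ∀ m : ℕ, α k ≠ -(m : ℝ))
    (hγ : ∀ j k : Fin r, j ≠ k → ∀ z : ℤ, γ j - γ k ≠ (z : ℝ))
    (hγα : ∀ j k : Fin r, j ≠ k → ∀ z : ℤ, γ j - γ k - α j ≠ (z : ℝ)) (P : ℝ → ℝ)
    (hP : ∀ x : ℝ, P x = ∑ j ∈ Finset.range (n + 1),
      (-1 : ℝ) ^ j * (n.choose j : ℝ) * B ^ (-(j : ℤ)) *
        ∏ k : Fin r,
          ((∏ i ∈ Finset.range j, (x - γ k - (i : ℝ))) *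
            ∏ i ∈ Finset.range (n - j), (x - γ k + α k + (i : ℝ)))) :
    (∃ p : Polynomial ℝ, p.degree = (r * n : ℕ) ∧ ∀ x : ℝ, P x = p.eval x) ∧
    (∀ l : Fin r, ∀ k : ℕ, k < n →
      HasSum (fun m : ℕ =>
        P (γ l + m) * (γ l + m) ^ k * B ^ m *
          ∏ k' : Fin r,
            (Real.Gamma ((m : ℝ) + γ l - γ k' + α k') /
              Real.Gamma ((m : ℝ) + γ l - γ k' + 1))) 0) := by
  have hB : B ≠ 0 := abs_pos.mp hB0
  refine ⟨⟨rodriguesPoly B α γ n, ?_, fun x => by rw [hP, eval_rodriguesPoly]⟩, fun l k hk => ?_⟩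
  · rw [degree_rodriguesPoly (fun h => by simp [h] at hB1), Fintype.card_fin]
  have hnum := sub_add_add_natCast_ne_zero hα hγα l
  have hden := sub_add_natCast_add_one_ne_zero hγ l
  have hw : ∀ j : ℕ, Summable fun t : ℕ =>
      (γ l + j + t) ^ k * latticeWeight B (fun k => α k + n) γ (γ l) t := fun j =>
    summable_add_pow_mul_latticeWeight hB hB1 (fun k' z => by
      convert hnum k' (n + z) using 1; push_cast; ring) hden _ k
  refine (hasSum_sum_neg_one_pow_mul_choose_mul_pow_mul_shift_eq_zero hk hw).congr_fun fun m => ?_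
  rw [hP, sum_mul, sum_mul, sum_mul]
  refine sum_congr rfl fun j hj => ?_
  rw [← rodrigues_term_mul_latticeWeight hB hnum hden (Nat.lt_succ_iff.mp (mem_range.mp hj)) m,
    latticeWeight]
  ring

/-- The paper's main Theorem specialized to a product of `r` Meixner weights on shifted
lattices `γ_k + ℤ₊`: the Rodrigues polynomial `P` has degree exactly `r·n` and satisfies
the multiple orthogonality relations with respect to the `r` discrete measures. -/
theorem stmt_6 (r : ℕ) (hr : 1 ≤ r) (n : ℕ) (B : ℝ) (hB0 : 0 < |B|) (hB1 : |B| < 1)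
    (α γ : Fin r → ℝ)
    (hα : ∀ k : Fin r, ∀ m : ℕ, α k ≠ -(m : ℝ))
    (hγ : ∀ j k : Fin r, j ≠ k → ∀ z : ℤ, γ j - γ k ≠ (z : ℝ))
    (hγα : ∀ j k : Fin r, j ≠ k → ∀ z : ℤ, γ j - γ k - α j ≠ (z : ℝ)) (P : ℝ → ℝ)
    (hP : ∀ x : ℝ, P x = ∑ j ∈ Finset.range (n + 1),
      (-1 : ℝ) ^ j * (n.choose j : ℝ) * B ^ (-(j : ℤ)) *
        ∏ k : Fin r,
          ((∏ i ∈ Finset.range j, (x - γ k - (i : ℝ))) *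
            ∏ i ∈ Finset.range (n - j), (x - γ k + α k + (i : ℝ)))) :
    (∃ p : Polynomial ℝ, p.degree = (r * n : ℕ) ∧ ∀ x : ℝ, P x = p.eval x) ∧
    (∀ l : Fin r, ∀ k : ℕ, k < n →
      HasSum (fun m : ℕ =>
        P (γ l + m) * (γ l + m) ^ k * B ^ m *
          ∏ k' : Fin r,
            (Real.Gamma ((m : ℝ) + γ l - γ k' + α k') /
              Real.Gamma ((m : ℝ) + γ l - γ k' + 1))) 0) :=
  stmt_6_general r n B hB0 hB1 α γ hα hγ hγα P hP
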